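/- Let c > 0 and define the Gaussian potential h(x) = e^{−c‖x‖²/2} on ℝ^d. Then Δh(x) = c(c‖x‖² − d) e^{−c‖x‖²/2}; in particular h is strictly subharmonic outside the ball of radius √(d/c). Fix w₁,…,w_k ∈ ℝ^d and define L(θ₁,…,θ_k) = 2 Σ_{1≤i<j≤k} h(θ_i − θ_j) − 2 Σ_{i=1}^k Σ_{j=1}^k h(θ_i − w_j). If θ = (θ₁,…,θ_k) satisfies c‖θ_i − w_j‖² > d for all i, j, then H(v) = L(θ₁ + v, …, θ_k + v) satisfies ΔH(0) = −2 Σ_{i,j} Δh(θ_i − w_j) < 0, so θ is not a local minimum of L. Hence at any local minimum of L there exist i, j with ‖θ_i − w_j‖² ≤ d/c. -/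

import Mathlib

open Finset

/-- The Laplacian of `f : ℝ^d → ℝ` at `x`: the trace of the Hessian, i.e. the sum of
the second derivatives in the coordinate directions. -/
noncomputable def laplacian {d : ℕ} (f : EuclideanSpace ℝ (Fin d) → ℝ)
    (x : EuclideanSpace ℝ (Fin d)) : ℝ :=
  ∑ i : Fin d, iteratedFDeriv ℝ 2 f x ![EuclideanSpace.single i 1, EuclideanSpace.single i 1]

/-!
Differentiating twice, `∇h(x) = -c h(x) x` and `D²h(x) = -c h(x) I + c² h(x) x xᵀ`, whose trace is
`c (c‖x‖² - d) h(x)`. Moving all `θᵢ` by the same `v` leaves the pairwise terms `h(θᵢ - θⱼ)`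
unchanged, so the Laplacian of `v ↦ L(θ + v)` at `0` is `-2 ∑ Δh(θᵢ - wⱼ)`, which is negative
when every `θᵢ` lies outside the ball of radius `√(d/c)` around every `wⱼ`. A `C²` function has
nonnegative Laplacian at a local minimum (second-derivative test on each coordinate line), so
such a `θ` is not a local minimum of `L`.
-/

section SecondDerivativeTest

/-- If `g'' a < 0`, then `a` is also a local maximum, so `g` is locally constant and `g'' a = 0`. -/
theorem IsLocalMin.deriv_deriv_nonneg {g : ℝ → ℝ} {a : ℝ} (hmin : IsLocalMin g a)
    (hc : ContinuousAt g a) : 0 ≤ deriv (deriv g) a := by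
  by_contra! hneg
  have hmax : IsLocalMax g a := isLocalMax_of_deriv_deriv_neg hneg hmin.deriv_eq_zero hc
  have hconst : g =ᶠ[nhds a] fun _ => g a := by
    filter_upwards [hmin, hmax] with y h₁ h₂ using le_antisymm h₂ h₁
  have : deriv (deriv g) a = 0 := by
    rw [hconst.deriv.deriv_eq]
    simp
  exact hneg.ne this

theorem IsLocalMin.iteratedFDeriv_two_nonneg {F : Type*} [NormedAddCommGroup F] [NormedSpace ℝ F]
    {f : F → ℝ} {x : F} (hmin : IsLocalMin f x) (hf : ContDiff ℝ 2 f) (v : F) :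
    0 ≤ iteratedFDeriv ℝ 2 f x ![v, v] := by
  set ℓ := ContinuousLinearMap.toSpanSingleton ℝ v
  have hf' : ContDiff ℝ 2 (fun y => f (x + y)) := hf.comp (contDiff_const.add contDiff_id)
  have hshift : IsLocalMin (fun y => f (x + y)) (ℓ 0) := by
    rw [map_zero]
    exact (by simpa using hmin : IsLocalMin f (x + 0)).comp_continuous
      (continuous_const_add x).continuousAt
  have hline := (hshift.comp_continuous ℓ.continuous.continuousAt).deriv_deriv_nonneg
    (hf'.continuous.comp ℓ.continuous).continuousAt
  rw [← iteratedDeriv_one, ← iteratedDeriv_succ', iteratedDeriv_eq_iteratedFDeriv,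
    ℓ.iteratedFDeriv_comp_right hf' 0 le_rfl, iteratedFDeriv_comp_add_left] at hline
  convert hline using 1
  simp only [ℓ, map_zero, add_zero, ContinuousMultilinearMap.compContinuousLinearMap_apply,
    ContinuousLinearMap.toSpanSingleton_apply, one_smul]
  congr 1
  ext i
  fin_cases i <;> rfl

end SecondDerivativeTest

section Laplacian

variable {d : ℕ} {f : EuclideanSpace ℝ (Fin d) → ℝ} {x : EuclideanSpace ℝ (Fin d)}

theorem laplacian_eq_sum_of_hasFDerivAt
    {f' : EuclideanSpace ℝ (Fin d) → EuclideanSpace ℝ (Fin d) →L[ℝ] ℝ}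
    {f'' : EuclideanSpace ℝ (Fin d) →L[ℝ] EuclideanSpace ℝ (Fin d) →L[ℝ] ℝ}
    (hf : ∀ y, HasFDerivAt f (f' y) y) (hf' : HasFDerivAt f' f'' x) :
    laplacian f x = ∑ i, f'' (EuclideanSpace.single i 1) (EuclideanSpace.single i 1) := by
  have hfderiv : fderiv ℝ f = f' := funext fun y => (hf y).fderiv
  simp [laplacian, iteratedFDeriv_two_apply, hfderiv, hf'.fderiv]

theorem laplacian_comp_add_left (f : EuclideanSpace ℝ (Fin d) → ℝ)
    (z x : EuclideanSpace ℝ (Fin d)) :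
    laplacian (fun v => f (z + v)) x = laplacian f (z + x) := by
  simp only [laplacian, iteratedFDeriv_comp_add_left]

theorem laplacian_const_sub (hf : ContDiffAt ℝ 2 f x) (a : ℝ) :
    laplacian (fun v => a - f v) x = -laplacian f x := by
  simp [laplacian, fun_iteratedFDeriv_sub_apply contDiffAt_const hf,
    iteratedFDeriv_const_of_ne two_ne_zero]

theorem laplacian_const_mul (hf : ContDiffAt ℝ 2 f x) (b : ℝ) :
    laplacian (fun v => b * f v) x = b * laplacian f x := by
  simp [laplacian, ← smul_eq_mul, iteratedFDeriv_const_smul_apply' hf, smul_sum]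

theorem laplacian_sum {ι : Type*} {s : Finset ι} {f : ι → EuclideanSpace ℝ (Fin d) → ℝ}
    (hf : ∀ i ∈ s, ContDiffAt ℝ 2 (f i) x) :
    laplacian (fun v => ∑ i ∈ s, f i v) x = ∑ i ∈ s, laplacian (f i) x := by
  simp only [laplacian, iteratedFDeriv_fun_sum_apply hf, _root_.sum_apply]
  exact sum_comm

theorem IsLocalMin.laplacian_nonneg (hmin : IsLocalMin f x) (hf : ContDiff ℝ 2 f) :
    0 ≤ laplacian f x :=
  sum_nonneg fun _ _ => hmin.iteratedFDeriv_two_nonneg hf _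

end Laplacian

section Gaussian

variable {F : Type*} [NormedAddCommGroup F] [InnerProductSpace ℝ F]

noncomputable def gaussian (c : ℝ) (x : F) : ℝ := Real.exp (-c * ‖x‖ ^ 2 / 2)

theorem contDiff_gaussian (c : ℝ) {n : WithTop ℕ∞} : ContDiff ℝ n (gaussian (F := F) c) :=
  Real.contDiff_exp.comp (((contDiff_norm_sq ℝ).const_smul (-c)).div_const 2)

theorem hasFDerivAt_gaussian (c : ℝ) (x : F) :
    HasFDerivAt (gaussian c) ((-c * gaussian c x) • innerSL ℝ x) x := by
  have hexponent :
      HasFDerivAt (fun y : F => -c * ‖y‖ ^ 2 / 2) ((-c / 2) • (2 • innerSL ℝ x)) x := by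
    have hrw : (fun y : F => -c * ‖y‖ ^ 2 / 2) = fun y => -c / 2 * ‖y‖ ^ 2 := by
      ext y
      ring
    rw [hrw]
    exact (hasStrictFDerivAt_norm_sq x).hasFDerivAt.const_mul (-c / 2)
  refine ((Real.hasDerivAt_exp _).comp_hasFDerivAt x hexponent).congr_fderiv ?_
  ext v
  simp [gaussian, smul_smul]
  ring

theorem laplacian_gaussian {d : ℕ} (c : ℝ) (x : EuclideanSpace ℝ (Fin d)) :
    laplacian (gaussian c) x = c * (c * ‖x‖ ^ 2 - d) * gaussian c x := by
  have hcoeff : HasFDerivAt (fun y => -c * gaussian c y)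
      ((c ^ 2 * gaussian c x) • innerSL ℝ x) x := by
    refine ((hasFDerivAt_gaussian c x).const_mul (-c)).congr_fderiv ?_
    rw [smul_smul]
    congr 1
    ring
  -- `innerSL ℝ` is typed as conjugate-linear; over `ℝ` it is linear, as `HasFDerivAt` needs.
  have hinner : HasFDerivAt (fun y : EuclideanSpace ℝ (Fin d) => innerSL ℝ y)
      (innerSL ℝ : EuclideanSpace ℝ (Fin d) →L[ℝ] _ →L[ℝ] ℝ) x :=
    (innerSL ℝ).hasFDerivAt
  have hunit : ∀ i : Fin d, (innerSL ℝ : EuclideanSpace ℝ (Fin d) →L[ℝ] _ →L[ℝ] ℝ)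
      (EuclideanSpace.single i 1) (EuclideanSpace.single i 1) = 1 := fun i => by
    change inner ℝ (EuclideanSpace.single i (1 : ℝ)) (EuclideanSpace.single i 1) = 1
    simp
  rw [laplacian_eq_sum_of_hasFDerivAt (hasFDerivAt_gaussian c) (hcoeff.smul hinner)]
  simp [hunit, EuclideanSpace.inner_single_right, sum_add_distrib, mul_assoc, ← mul_sum, ← sq]
  rw [EuclideanSpace.real_norm_sq_eq]
  ring

theorem laplacian_gaussian_pos {d : ℕ} {c : ℝ} (hc : 0 < c) {x : EuclideanSpace ℝ (Fin d)}
    (hx : d < c * ‖x‖ ^ 2) : 0 < laplacian (gaussian c) x := by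
  rw [laplacian_gaussian]
  exact mul_pos (mul_pos hc (sub_pos.mpr hx)) (Real.exp_pos _)

end Gaussian

section FixedChargeLoss

variable {E : Type*} {k : ℕ}

noncomputable def fixedChargeLoss [AddCommGroup E] (h : E → ℝ) (w : Fin k → E)
    (θ : Fin k → E) : ℝ :=
  2 * ∑ i, ∑ j ∈ univ.filter (fun j => i < j), h (θ i - θ j) - 2 * ∑ i, ∑ j, h (θ i - w j)

theorem fixedChargeLoss_add_const [AddCommGroup E] (h : E → ℝ) (w θ : Fin k → E) (v : E) :
    fixedChargeLoss h w (fun i => θ i + v)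
      = 2 * ∑ i, ∑ j ∈ univ.filter (fun j => i < j), h (θ i - θ j)
        - 2 * ∑ i, ∑ j, h (θ i - w j + v) := by
  simp only [fixedChargeLoss, add_sub_add_right_eq_sub, sub_add_eq_add_sub]

theorem contDiff_fixedChargeLoss [NormedAddCommGroup E] [NormedSpace ℝ E] {n : WithTop ℕ∞}
    {h : E → ℝ} (hh : ContDiff ℝ n h) (w : Fin k → E) :
    ContDiff ℝ n (fixedChargeLoss h w) := by
  unfold fixedChargeLoss
  fun_prop

end FixedChargeLoss

section Translation

variable {d k : ℕ} {h : EuclideanSpace ℝ (Fin d) → ℝ} {w θ : Fin k → EuclideanSpace ℝ (Fin d)}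

theorem laplacian_fixedChargeLoss_translate (hh : ContDiff ℝ 2 h) :
    laplacian (fun v => fixedChargeLoss h w (fun i => θ i + v)) 0
      = -2 * ∑ i, ∑ j, laplacian h (θ i - w j) := by
  have hshift : ∀ z, ContDiff ℝ 2 (fun v => h (z + v)) := fun z =>
    hh.comp (contDiff_const.add contDiff_id)
  simp_rw [fixedChargeLoss_add_const]
  rw [laplacian_const_sub (by fun_prop), laplacian_const_mul (by fun_prop),
    laplacian_sum fun i _ => (by fun_prop)]
  simp_rw [laplacian_sum fun j _ => (hshift _).contDiffAt, laplacian_comp_add_left, add_zero]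
  ring

theorem laplacian_fixedChargeLoss_translate_neg (hk : 0 < k) (hh : ContDiff ℝ 2 h)
    (hpos : ∀ i j, 0 < laplacian h (θ i - w j)) :
    laplacian (fun v => fixedChargeLoss h w (fun i => θ i + v)) 0 < 0 := by
  have : Nonempty (Fin k) := ⟨⟨0, hk⟩⟩
  have hsum : 0 < ∑ i, ∑ j, laplacian h (θ i - w j) :=
    sum_pos (fun i _ => sum_pos (fun j _ => hpos i j) univ_nonempty) univ_nonempty
  rw [laplacian_fixedChargeLoss_translate hh]
  linarith

theorem not_isLocalMin_fixedChargeLoss (hk : 0 < k) (hh : ContDiff ℝ 2 h)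
    (hpos : ∀ i j, 0 < laplacian h (θ i - w j)) : ¬ IsLocalMin (fixedChargeLoss h w) θ := by
  intro hmin
  have hθ : IsLocalMin (fixedChargeLoss h w) (fun i => θ i + 0) := by simpa using hmin
  have htranslate : IsLocalMin (fun v => fixedChargeLoss h w (fun i => θ i + v)) 0 :=
    hθ.comp_continuous (g := fun v i => θ i + v) (by fun_prop)
  have := htranslate.laplacian_nonneg ((contDiff_fixedChargeLoss hh w).comp (by fun_prop))
  linarith [laplacian_fixedChargeLoss_translate_neg hk hh hpos]

end Translation

/-- for the Gaussian potential `h(x) = e^{-c‖x‖²/2}` one has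
`Δh(x) = c(c‖x‖² - d) e^{-c‖x‖²/2}`, so `h` is strictly subharmonic outside the ball
of radius `√(d/c)`. For the fixed-charge loss `L`, if `c‖θᵢ-wⱼ‖² > d` for all `i,j`
then the correlated translation `H(v) = L(θ+v)` has `ΔH(0) = -2∑ Δh(θᵢ-wⱼ) < 0` and
`θ` is not a local minimum of `L`; hence at any local minimum there are `i, j` with
`‖θᵢ-wⱼ‖² ≤ d/c`. -/
theorem stmt15 {d k : ℕ} (hk : 0 < k) (c : ℝ) (hc : 0 < c)
    (h : EuclideanSpace ℝ (Fin d) → ℝ)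
    (hdef : ∀ x, h x = Real.exp (-c * ‖x‖ ^ 2 / 2))
    (w : Fin k → EuclideanSpace ℝ (Fin d))
    (L : (Fin k → EuclideanSpace ℝ (Fin d)) → ℝ)
    (hL : L = fun θ => 2 * ∑ i, ∑ j ∈ Finset.univ.filter (fun j => i < j), h (θ i - θ j)
      - 2 * ∑ i, ∑ j, h (θ i - w j)) :
    (∀ x : EuclideanSpace ℝ (Fin d),
      laplacian h x = c * (c * ‖x‖ ^ 2 - d) * Real.exp (-c * ‖x‖ ^ 2 / 2)) ∧
    (∀ θ : Fin k → EuclideanSpace ℝ (Fin d),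
      (∀ i j, (d : ℝ) < c * ‖θ i - w j‖ ^ 2) →
        laplacian (fun v => L (fun i => θ i + v)) 0
            = -2 * ∑ i, ∑ j, laplacian h (θ i - w j) ∧
        laplacian (fun v => L (fun i => θ i + v)) 0 < 0 ∧
        ¬ IsLocalMin L θ) ∧
    (∀ θ : Fin k → EuclideanSpace ℝ (Fin d),
      IsLocalMin L θ → ∃ i j, ‖θ i - w j‖ ^ 2 ≤ (d : ℝ) / c) := by
  obtain rfl : h = gaussian c := funext hdef
  obtain rfl : L = fixedChargeLoss (gaussian c) w := hL
  have hsmooth : ContDiff ℝ 2 (gaussian (F := EuclideanSpace ℝ (Fin d)) c) := contDiff_gaussian c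
  have hpos_of_far : ∀ θ : Fin k → EuclideanSpace ℝ (Fin d),
      (∀ i j, (d : ℝ) < c * ‖θ i - w j‖ ^ 2) → ∀ i j, 0 < laplacian (gaussian c) (θ i - w j) :=
    fun θ hfar i j => laplacian_gaussian_pos hc (hfar i j)
  refine ⟨laplacian_gaussian c, fun θ hfar => ⟨laplacian_fixedChargeLoss_translate hsmooth,
    laplacian_fixedChargeLoss_translate_neg hk hsmooth (hpos_of_far θ hfar),
    not_isLocalMin_fixedChargeLoss hk hsmooth (hpos_of_far θ hfar)⟩, fun θ hmin => ?_⟩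
  by_contra! hnear
  refine not_isLocalMin_fixedChargeLoss hk hsmooth (hpos_of_far θ fun i j => ?_) hmin
  rw [← div_lt_iff₀' hc]
  exact hnear i j
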